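/- arXiv:2408.08511 — 8 statements merged into one kernel-verified Lean document; each statement's English description precedes it below -/
import Mathlib

section
/- Suppose dom Λ is closed and Λ is continuous on dom Λ. Then for every α ∈ ℝ, λ ∈ (0,1), and every ℝ^d-valued random vector X, the set R_{α,λ}(X) := {z ∈ ℝ^g : ℙ(Λ(X + Bᵀz) < α) ≤ λ and ℙ(X + Bᵀz ∈ dom Λ) = 1} is closed in ℝ^g. -/
/-!
The event `{Λ(X + Bᵀz) < α}` is the preimage of `{x | Λ x < α}`, which is open because `Λ` is
upper semicontinuous (it is continuous on its closed domain and `⊥` off it), and the event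
`{X + Bᵀz ∉ dom Λ}` is the preimage of the open set `(dom Λ)ᶜ`. For an open set `U` and a
family of random vectors depending continuously on `z`, the probability `ℙ(Y_z ∈ U)` is lower
semicontinuous in `z`, so both defining conditions of `R_{α,λ}(X)` cut out closed sets.
-/

open MeasureTheory Filter Topology

theorem WithBot.lt_coe_of_unbotD_lt {a : WithBot ℝ} {s : ℝ} (h : a ≠ ⊥ → a.unbotD 0 < s) :
    a < s := by
  induction a using WithBot.recBotCoe with
  | bot => exact WithBot.bot_lt_coe s
  | coe r => exact WithBot.coe_lt_coe.mpr (h WithBot.coe_ne_bot)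

theorem upperSemicontinuous_of_continuousOn_unbotD {E : Type*} [TopologicalSpace E]
    {Λ : E → WithBot ℝ} (hdom : IsClosed {x | Λ x ≠ ⊥})
    (hcont : ContinuousOn (fun x => (Λ x).unbotD 0) {x | Λ x ≠ ⊥}) :
    UpperSemicontinuous Λ := by
  intro x y hxy
  induction y using WithBot.recBotCoe with
  | bot => exact absurd hxy not_lt_bot
  | coe s =>
    suffices h : ∀ᶠ x' in 𝓝 x, Λ x' ≠ ⊥ → (Λ x').unbotD 0 < s from
      h.mono fun x' => WithBot.lt_coe_of_unbotD_lt
    by_cases hx : Λ x = ⊥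
    · filter_upwards [hdom.isOpen_compl.mem_nhds (not_not.mpr hx)] with x' hx' hx'dom
      exact absurd hx'dom hx'
    · have hxs : (Λ x).unbotD 0 < s := by
        obtain ⟨r, hr⟩ := WithBot.ne_bot_iff_exists.mp hx
        rw [← hr] at hxy ⊢
        exact WithBot.coe_lt_coe.mp hxy
      exact eventually_nhdsWithin_iff.mp ((hcont x hx).eventually_lt_const hxs)

/-- Countability of the neighbourhood basis is what lets the measure pass to the increasing
union of the events `{Y_z ∈ U for all z ∈ Vₙ}`. -/
theorem lowerSemicontinuous_measure_setOf_mem {Ω Z E : Type*} [MeasurableSpace Ω]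
    (μ : Measure Ω) [TopologicalSpace Z] [FirstCountableTopology Z] [TopologicalSpace E]
    {Y : Z → Ω → E} (hY : ∀ ω, Continuous fun z => Y z ω) {U : Set E} (hU : IsOpen U) :
    LowerSemicontinuous fun z => μ {ω | Y z ω ∈ U} := by
  intro z₀ t ht
  obtain ⟨V, hV⟩ := (𝓝 z₀).exists_antitone_basis
  set C : ℕ → Set Ω := fun n => {ω | ∀ z ∈ V n, Y z ω ∈ U}
  have hC_mono : Monotone C := fun m n hmn ω hω z hz => hω z (hV.antitone hmn hz)
  have h_sub : {ω | Y z₀ ω ∈ U} ⊆ ⋃ n, C n := fun ω hω => by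
    obtain ⟨n, hn⟩ := hV.mem_iff.mp ((hU.preimage (hY ω)).mem_nhds hω)
    exact Set.mem_iUnion.mpr ⟨n, fun z hz => hn hz⟩
  have ht_sup : t < ⨆ n, μ (C n) :=
    hC_mono.measure_iUnion (μ := μ) ▸ ht.trans_le (measure_mono h_sub)
  obtain ⟨n, hn⟩ := lt_iSup_iff.mp ht_sup
  filter_upwards [hV.mem n] with z hz
  exact hn.trans_le (measure_mono fun ω hω => hω z hz)

theorem isClosed_setOf_measure_setOf_mem_eq_one {Ω Z E : Type*} [MeasurableSpace Ω]
    (μ : Measure Ω) [IsProbabilityMeasure μ] [TopologicalSpace Z] [FirstCountableTopology Z]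
    [TopologicalSpace E] [MeasurableSpace E] [OpensMeasurableSpace E] {Y : Z → Ω → E}
    (hY : ∀ ω, Continuous fun z => Y z ω) (hYm : ∀ z, Measurable (Y z)) {F : Set E}
    (hF : IsClosed F) : IsClosed {z | μ {ω | Y z ω ∈ F} = 1} := by
  have h_eq : {z | μ {ω | Y z ω ∈ F} = 1} = (fun z => μ {ω | Y z ω ∈ Fᶜ}) ⁻¹' Set.Iic 0 := by
    ext z
    simp only [Set.mem_ofPred_eq, Set.mem_preimage, Set.mem_Iic, nonpos_iff_eq_zero]
    exact (prob_compl_eq_zero_iff (hYm z hF.measurableSet)).symm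
  rw [h_eq]
  exact (lowerSemicontinuous_measure_setOf_mem μ hY hF.isOpen_compl).isClosed_preimage 0

theorem stmt7_general {Ω : Type*} [MeasurableSpace Ω] (P : Measure Ω) [IsProbabilityMeasure P]
    {d g : ℕ} (Λ : (Fin d → ℝ) → WithBot ℝ)
    (hdom_closed : IsClosed {x : Fin d → ℝ | Λ x ≠ ⊥})
    (hcont : ContinuousOn (fun x => (Λ x).unbotD 0) {x : Fin d → ℝ | Λ x ≠ ⊥})
    (B : Matrix (Fin g) (Fin d) ℝ)
    (X : Ω → Fin d → ℝ) (hX : Measurable X)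
    (α lam : ℝ) :
    IsClosed {z : Fin g → ℝ |
      P {ω | Λ (X ω + B.transpose.mulVec z) < (α : WithBot ℝ)} ≤ ENNReal.ofReal lam ∧
      P {ω | X ω + B.transpose.mulVec z ∈ {x : Fin d → ℝ | Λ x ≠ ⊥}} = 1} := by
  have hY : ∀ ω, Continuous fun z : Fin g → ℝ => X ω + B.transpose.mulVec z := fun ω => by
    fun_prop
  have h_lt_open : IsOpen (Λ ⁻¹' Set.Iio α) :=
    (upperSemicontinuous_of_continuousOn_unbotD hdom_closed hcont).isOpen_preimage α
  refine IsClosed.inter ?_ ?_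
  · exact (lowerSemicontinuous_measure_setOf_mem P hY h_lt_open).isClosed_preimage _
  · exact isClosed_setOf_measure_setOf_mem_eq_one P hY (fun z => hX.add_const _) hdom_closed

/-- If `dom Λ` is nonempty and closed and `Λ` is continuous on `dom Λ`, then the sensitive
systemic value-at-risk `R_{α,λ}(X) = {z | ℙ(Λ(X + Bᵀz) < α) ≤ λ, ℙ(X + Bᵀz ∈ dom Λ) = 1}`
is a closed subset of `ℝ^g`. -/
theorem stmt7 {Ω : Type*} [MeasurableSpace Ω] (P : Measure Ω) [IsProbabilityMeasure P]
    {d g : ℕ} (Λ : (Fin d → ℝ) → WithBot ℝ)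
    (hdom_ne : {x : Fin d → ℝ | Λ x ≠ ⊥}.Nonempty)
    (hdom_closed : IsClosed {x : Fin d → ℝ | Λ x ≠ ⊥})
    (hcont : ContinuousOn (fun x => (Λ x).unbotD 0) {x : Fin d → ℝ | Λ x ≠ ⊥})
    (B : Matrix (Fin g) (Fin d) ℝ)
    (hB01 : ∀ j i, B j i = 0 ∨ B j i = 1)
    (hBcol : ∀ i, ∃! j, B j i = 1)
    (X : Ω → Fin d → ℝ) (hX : Measurable X)
    (α lam : ℝ) (hlam0 : 0 < lam) (hlam1 : lam < 1) :
    IsClosed {z : Fin g → ℝ |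
      P {ω | Λ (X ω + B.transpose.mulVec z) < (α : WithBot ℝ)} ≤ ENNReal.ofReal lam ∧
      P {ω | X ω + B.transpose.mulVec z ∈ {x : Fin d → ℝ | Λ x ≠ ⊥}} = 1} :=
  stmt7_general P Λ hdom_closed hcont B X hX α lam
end

section
/- If dom Λ ⊆ x^LB + ℝ^d₊ for some x^LB ∈ ℝ^d (dom Λ is bounded below with respect to the componentwise order), and X is an ℝ^d-valued random vector with ℙ(X ∈ dom Λ) = 1, then the set R_{α,λ}(X) = {z ∈ ℝ^g : ℙ(Λ(X + Bᵀz) < α) ≤ λ, ℙ(X + Bᵀz ∈ dom Λ) = 1} is bounded below with respect to ℝ^g₊: there exists z^LB ∈ ℝ^g with R_{α,λ}(X) ⊆ z^LB + ℝ^g₊. -/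
open MeasureTheory

/-!
Choose for every group `j` a member `i j`, so that `(Bᵀ z) (i j) = z j`. Since `X` is finite,
some level `n`, chosen once for all `z`, has `ℙ(‖X‖ ≤ n) > 0`. If `z ∈ R_{α,λ}(X)` then `X + Bᵀ z ∈ dom Λ` almost surely,
so some `ω` with `‖X ω‖ ≤ n` has `x^LB ≤ X ω + Bᵀ z`; reading this at `i j` gives
`z j ≥ x^LB (i j) - n`, a bound independent of `z`.
-/

namespace Matrix

variable {m n R : Type*} [DecidableEq m] [NonAssocSemiring R]

theorem col_eq_single_of_zero_one {B : Matrix m n R} {i : n} {j : m}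
    (h01 : ∀ j', B j' i = 0 ∨ B j' i = 1) (huniq : ∀ j', B j' i = 1 → j' = j)
    (hji : B j i = 1) : (fun j' => B j' i) = Pi.single j 1 := by
  ext j'
  by_cases h : j' = j
  · subst h; simp [hji]
  · rw [Pi.single_eq_of_ne h]
    exact (h01 j').resolve_right (mt (huniq j') h)

theorem transpose_mulVec_apply_of_col_eq_single [Fintype m] {B : Matrix m n R} {i : n} {j : m}
    (hcol : (fun j' => B j' i) = Pi.single j 1) (z : m → R) : (Bᵀ *ᵥ z) i = z j := by
  change (fun j' => B j' i) ⬝ᵥ z = z j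
  rw [hcol, single_dotProduct, one_mul]

end Matrix

theorem MeasureTheory.exists_nat_measure_le_pos {Ω : Type*} [MeasurableSpace Ω]
    (μ : Measure Ω) [NeZero μ] (f : Ω → ℝ) : ∃ n : ℕ, 0 < μ {ω | f ω ≤ n} := by
  apply exists_measure_pos_of_not_measure_iUnion_null
  have hcover : (⋃ n : ℕ, {ω | f ω ≤ n}) = Set.univ :=
    Set.eq_univ_of_forall fun ω => Set.mem_iUnion.2 (exists_nat_ge (f ω))
  rw [hcover]
  exact NeZero.ne _

theorem stmt9_general {Ω : Type*} [MeasurableSpace Ω] (P : Measure Ω) [IsProbabilityMeasure P]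
    {d g : ℕ} (Λ : (Fin d → ℝ) → WithBot ℝ)
    (xLB : Fin d → ℝ) (hdom : ∀ x : Fin d → ℝ, Λ x ≠ ⊥ → xLB ≤ x)
    (B : Matrix (Fin g) (Fin d) ℝ)
    (hB01 : ∀ j i, B j i = 0 ∨ B j i = 1)
    (hBcol : ∀ i, ∃! j, B j i = 1)
    (hBrow : ∀ j, ∃ i, B j i = 1)
    (X : Ω → Fin d → ℝ) (hX : Measurable X)
    (α lam : ℝ) :
    ∃ zLB : Fin g → ℝ, ∀ z : Fin g → ℝ,
      (P {ω | Λ (X ω + B.transpose.mulVec z) < (α : WithBot ℝ)} ≤ ENNReal.ofReal lam ∧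
        P {ω | Λ (X ω + B.transpose.mulVec z) ≠ ⊥} = 1) → zLB ≤ z := by
  choose member hmember using hBrow
  obtain ⟨n, hn⟩ := exists_nat_measure_le_pos P fun ω => ‖X ω‖
  refine ⟨fun j => xLB (member j) - n, ?_⟩
  rintro z ⟨-, hz⟩ j
  have hmeas : MeasurableSet {ω | ‖X ω‖ ≤ n} := measurableSet_le hX.norm measurable_const
  have hsum : P Set.univ < P {ω | ‖X ω‖ ≤ n} + P {ω | Λ (X ω + B.transpose.mulVec z) ≠ ⊥} := by
    rw [measure_univ, hz, add_comm]
    exact ENNReal.lt_add_right ENNReal.one_ne_top hn.ne'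
  obtain ⟨ω, hωn, hωdom⟩ :=
    nonempty_inter_of_measure_lt_add' P hmeas (Set.subset_univ _) (Set.subset_univ _) hsum
  have hcol := Matrix.col_eq_single_of_zero_one (hB01 · (member j))
    (fun j' h => (hBcol (member j)).unique h (hmember j)) (hmember j)
  have hlow : xLB (member j) ≤ X ω (member j) + z j := by
    have h := hdom _ hωdom (member j)
    rwa [Pi.add_apply, Matrix.transpose_mulVec_apply_of_col_eq_single hcol] at h
  have hX_le : X ω (member j) ≤ n := (le_abs_self _).trans ((norm_le_pi_norm _ _).trans hωn)
  show xLB (member j) - n ≤ z j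
  linarith

/-- If `dom Λ ⊆ x^LB + ℝ^d₊` and `ℙ(X ∈ dom Λ) = 1`, then the sensitive systemic
value-at-risk `R_{α,λ}(X)` is bounded below with respect to `ℝ^g₊`: there exists
`z^LB ∈ ℝ^g` with `R_{α,λ}(X) ⊆ z^LB + ℝ^g₊`. -/
theorem stmt9 {Ω : Type*} [MeasurableSpace Ω] (P : Measure Ω) [IsProbabilityMeasure P]
    {d g : ℕ} (Λ : (Fin d → ℝ) → WithBot ℝ) (hΛ : Monotone Λ)
    (hdom_closed : IsClosed {x : Fin d → ℝ | Λ x ≠ ⊥})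
    (xLB : Fin d → ℝ) (hdom : ∀ x : Fin d → ℝ, Λ x ≠ ⊥ → xLB ≤ x)
    (B : Matrix (Fin g) (Fin d) ℝ)
    (hB01 : ∀ j i, B j i = 0 ∨ B j i = 1)
    (hBcol : ∀ i, ∃! j, B j i = 1)
    (hBrow : ∀ j, ∃ i, B j i = 1)
    (X : Ω → Fin d → ℝ) (hX : Measurable X)
    (hXdom : ∀ᵐ ω ∂P, Λ (X ω) ≠ ⊥)
    (α lam : ℝ) (hlam0 : 0 < lam) (hlam1 : lam < 1) :
    ∃ zLB : Fin g → ℝ, ∀ z : Fin g → ℝ,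
      (P {ω | Λ (X ω + B.transpose.mulVec z) < (α : WithBot ℝ)} ≤ ENNReal.ofReal lam ∧
        P {ω | Λ (X ω + B.transpose.mulVec z) ≠ ⊥} = 1) → zLB ≤ z :=
  stmt9_general P Λ xLB hdom B hB01 hBcol hBrow X hX α lam
end

section
/- Let A ⊆ ℝ^g be a nonempty closed upper set (A = A + ℝ^g₊) satisfying the Motzkin decomposition A = (A ∩ Z) + ℝ^g₊ with Z := [z^LB, z^UB] a box in ℝ^g. Then for every v ∈ Z, the distance to A equals the distance to A ∩ Z: d(v, A) = d(v, A ∩ Z). -/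
open Pointwise

/-!
Write a point of `A = (A ∩ Z) + ℝ^g₊` as `w + y` with `w ∈ A ∩ Z`, `y ≥ 0`. Clamping `v`
coordinatewise into the box `[w, w + y]` gives a point that still lies in `w + ℝ^g₊ ⊆ A`, lies in
`Z` (it sits between `w` and `max w v`, both in `Z`), and is coordinatewise at least as close
to `v` as `w + y`. Hence every point of `A` is matched by a point of `A ∩ Z` that is no farther
from `v`.
-/

theorem abs_sub_max_min_le {w u t : ℝ} (v : ℝ) (ht : t ∈ Set.Icc w u) :
    |v - max w (min v u)| ≤ |v - t| := by
  obtain ⟨hwt, htu⟩ := ht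
  grind

theorem EuclideanSpace.dist_le_dist_of_forall_abs_sub_le {ι : Type*} [Fintype ι]
    {x y z : EuclideanSpace ℝ ι} (h : ∀ i, |x i - y i| ≤ |x i - z i|) :
    dist x y ≤ dist x z := by
  simp only [EuclideanSpace.dist_eq, Real.dist_eq]
  exact Real.sqrt_le_sqrt <| Finset.sum_le_sum fun i _ => pow_le_pow_left₀ (abs_nonneg _) (h i) 2

theorem Metric.infDist_eq_of_forall_exists_dist_le {α : Type*} [PseudoMetricSpace α]
    {x : α} {s t : Set α} (hst : s ⊆ t) (h : ∀ a ∈ t, ∃ b ∈ s, dist x b ≤ dist x a) :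
    infDist x t = infDist x s := by
  refine congrArg ENNReal.toReal (le_antisymm (infEDist_anti hst) (le_infEDist.mpr ?_))
  intro a ha
  obtain ⟨b, hb, hba⟩ := h a ha
  exact (infEDist_le_edist_of_mem hb).trans
    (by simpa only [edist_dist] using ENNReal.ofReal_le_ofReal hba)

theorem exists_mem_add_orthant_inter_box_dist_le {ι : Type*} [Fintype ι]
    {B : Set (EuclideanSpace ℝ ι)} {zLB zUB v : EuclideanSpace ℝ ι}
    (hB : B ⊆ {z | ∀ j, zLB j ≤ z j ∧ z j ≤ zUB j}) (hv : ∀ j, zLB j ≤ v j ∧ v j ≤ zUB j)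
    {a : EuclideanSpace ℝ ι} (ha : a ∈ B + {y | ∀ j, 0 ≤ y j}) :
    ∃ b ∈ (B + {y | ∀ j, 0 ≤ y j}) ∩ {z | ∀ j, zLB j ≤ z j ∧ z j ≤ zUB j},
      dist v b ≤ dist v a := by
  obtain ⟨w, hw, y, hy, rfl⟩ := ha
  set b : EuclideanSpace ℝ ι := WithLp.toLp 2 fun j => max (w j) (min (v j) (w j + y j))
  have hb : ∀ j, b j = max (w j) (min (v j) (w j + y j)) := fun j => rfl
  refine ⟨b, ⟨⟨w, hw, b - w, fun j => ?_, add_sub_cancel _ _⟩, fun j => ⟨?_, ?_⟩⟩, ?_⟩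
  · simp [hb]
  · exact (hB hw j).1.trans (by simp [hb])
  · simpa [hb] using ⟨(hB hw j).2, Or.inl (hv j).2⟩
  · refine EuclideanSpace.dist_le_dist_of_forall_abs_sub_le fun j => ?_
    rw [hb, PiLp.add_apply]
    exact abs_sub_max_min_le _ ⟨le_add_of_nonneg_right (hy j), le_rfl⟩

theorem stmt11_general {g : ℕ} (A : Set (EuclideanSpace ℝ (Fin g)))
    (zLB zUB : EuclideanSpace ℝ (Fin g))
    (hMotzkin : A = (A ∩ {z : EuclideanSpace ℝ (Fin g) | ∀ j, zLB j ≤ z j ∧ z j ≤ zUB j})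
        + {y : EuclideanSpace ℝ (Fin g) | ∀ j, 0 ≤ y j})
    (v : EuclideanSpace ℝ (Fin g)) (hv : ∀ j, zLB j ≤ v j ∧ v j ≤ zUB j) :
    Metric.infDist v A =
      Metric.infDist v
        (A ∩ {z : EuclideanSpace ℝ (Fin g) | ∀ j, zLB j ≤ z j ∧ z j ≤ zUB j}) := by
  refine Metric.infDist_eq_of_forall_exists_dist_le Set.inter_subset_left fun a ha => ?_
  rw [hMotzkin] at ha
  obtain ⟨b, hb, hba⟩ := exists_mem_add_orthant_inter_box_dist_le Set.inter_subset_right hv ha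
  rw [← hMotzkin] at hb
  exact ⟨b, hb, hba⟩

/-- If `A ⊆ ℝ^g` is a nonempty closed upper set with Motzkin decomposition
`A = (A ∩ Z) + ℝ^g₊` for a box `Z = [z^LB, z^UB]`, then for every `v ∈ Z` the distance
to `A` equals the distance to `A ∩ Z`. -/
theorem stmt11 {g : ℕ} (A : Set (EuclideanSpace ℝ (Fin g)))
    (zLB zUB : EuclideanSpace ℝ (Fin g))
    (hne : A.Nonempty) (hclosed : IsClosed A)
    (hupper : A + {y : EuclideanSpace ℝ (Fin g) | ∀ j, 0 ≤ y j} = A)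
    (hMotzkin : A = (A ∩ {z : EuclideanSpace ℝ (Fin g) | ∀ j, zLB j ≤ z j ∧ z j ≤ zUB j})
        + {y : EuclideanSpace ℝ (Fin g) | ∀ j, 0 ≤ y j})
    (v : EuclideanSpace ℝ (Fin g)) (hv : ∀ j, zLB j ≤ v j ∧ v j ≤ zUB j) :
    Metric.infDist v A =
      Metric.infDist v
        (A ∩ {z : EuclideanSpace ℝ (Fin g) | ∀ j, zLB j ≤ z j ∧ z j ≤ zUB j}) :=
  stmt11_general A zLB zUB hMotzkin v hv
end

section
/- Let (π, p̄, x) be an Eisenberg–Noe network and f : ℝ^d → ℝ strictly increasing. If p* maximizes f(p) over the set {p ∈ [0, p̄] : p ≤ πᵀp + x}, then p* is a clearing vector, i.e., for each i either p*ᵢ = p̄ᵢ or p*ᵢ = (πᵀp*)ᵢ + xᵢ. -/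
/-!
If some coordinate `i` of a feasible `p*` were strictly below both its nominal liability `p̄ᵢ`
and its available funds `(πᵀp*)ᵢ + xᵢ`, raise it to the smaller of the two. Since `π ≥ 0`, the map
`p ↦ πᵀp + x` is monotone, so raising one payment only raises the funds of every bank and the new
vector is still feasible; it dominates `p*` strictly, so `f` increases, contradicting optimality.
-/

open Function

theorem Matrix.monotone_mulVec_of_nonneg {m n R : Type*} [Fintype n] [Semiring R] [PartialOrder R]
    [IsOrderedRing R] {M : Matrix m n R} (hM : ∀ i j, 0 ≤ M i j) : Monotone M.mulVec :=
  fun _ _ huv i => dotProduct_le_dotProduct_of_nonneg_left huv (hM i)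

section RaiseCoordinate

variable {ι α : Type*} [DecidableEq ι] [LinearOrder α] {T : (ι → α) → ι → α} {b p : ι → α}

theorem update_min_le_cap (hub : p ≤ b) (i : ι) : update p i (min (b i) (T p i)) ≤ b :=
  update_le_iff.2 ⟨min_le_left _ _, fun j _ => hub j⟩

theorem update_min_le_apply (hT : Monotone T) (hfix : p ≤ T p) (i : ι)
    (hi : p i ≤ min (b i) (T p i)) :
    update p i (min (b i) (T p i)) ≤ T (update p i (min (b i) (T p i))) := by
  have hTle : T p ≤ T (update p i (min (b i) (T p i))) := hT (le_update_self_iff.2 hi)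
  exact update_le_iff.2 ⟨(min_le_right _ _).trans (hTle i), fun j _ => (hfix j).trans (hTle j)⟩

theorem eq_or_eq_apply_of_maximizes {β : Type*} [Preorder β] {f : (ι → α) → β}
    (hf : StrictMono f) (hT : Monotone T) (hub : p ≤ b) (hfix : p ≤ T p)
    (hmax : ∀ q, p ≤ q → q ≤ b → q ≤ T q → f q ≤ f p) (i : ι) :
    p i = b i ∨ p i = T p i := by
  by_contra! hne
  have hlt : p i < min (b i) (T p i) :=
    lt_min ((hub i).lt_of_ne hne.1) ((hfix i).lt_of_ne hne.2)
  have hpq : p < update p i (min (b i) (T p i)) := lt_update_self_iff.2 hlt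
  exact (hf hpq).not_ge <|
    hmax _ hpq.le (update_min_le_cap hub i) (update_min_le_apply hT hfix i hlt.le)

end RaiseCoordinate

theorem stmt14_general {d : ℕ} (pimat : Matrix (Fin d) (Fin d) ℝ)
    (hpi0 : ∀ i j, 0 ≤ pimat i j)
    (pbar : Fin d → ℝ)
    (x : Fin d → ℝ)
    (f : (Fin d → ℝ) → ℝ)
    (hf : ∀ a b : Fin d → ℝ, a ≤ b → a ≠ b → f a < f b)
    (pstar : Fin d → ℝ)
    (hfeas : 0 ≤ pstar ∧ pstar ≤ pbar ∧ pstar ≤ pimat.transpose.mulVec pstar + x)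
    (hopt : ∀ p : Fin d → ℝ, 0 ≤ p → p ≤ pbar → p ≤ pimat.transpose.mulVec p + x →
      f p ≤ f pstar) :
    ∀ i, pstar i = pbar i ∨ pstar i = pimat.transpose.mulVec pstar i + x i := by
  obtain ⟨hnonneg, hub, hliab⟩ := hfeas
  have hT : Monotone fun p => pimat.transpose.mulVec p + x := fun _ _ hpq =>
    add_le_add_left (Matrix.monotone_mulVec_of_nonneg (fun i j => hpi0 j i) hpq) x
  exact eq_or_eq_apply_of_maximizes (fun a b hab => hf a b hab.le hab.ne) hT hub hliab
    fun q hpq => hopt q (hnonneg.trans hpq)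

/-- If `p*` maximizes a strictly increasing function `f` over
`{p ∈ [0, p̄] : p ≤ πᵀp + x}`, then `p*` is a clearing vector of the Eisenberg–Noe
network `(π, p̄, x)`: each component satisfies absolute priority. -/
theorem stmt14 {d : ℕ} (pimat : Matrix (Fin d) (Fin d) ℝ)
    (hpi0 : ∀ i j, 0 ≤ pimat i j) (hpi1 : ∀ i, ∑ j, pimat i j = 1)
    (hpid : ∀ i, pimat i i = 0)
    (pbar : Fin d → ℝ) (hpbar : ∀ i, 0 < pbar i)
    (x : Fin d → ℝ) (hx : 0 ≤ x)
    (f : (Fin d → ℝ) → ℝ)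
    (hf : ∀ a b : Fin d → ℝ, a ≤ b → a ≠ b → f a < f b)
    (pstar : Fin d → ℝ)
    (hfeas : 0 ≤ pstar ∧ pstar ≤ pbar ∧ pstar ≤ pimat.transpose.mulVec pstar + x)
    (hopt : ∀ p : Fin d → ℝ, 0 ≤ p → p ≤ pbar → p ≤ pimat.transpose.mulVec p + x →
      f p ≤ f pstar) :
    ∀ i, pstar i = pbar i ∨ pstar i = pimat.transpose.mulVec pstar i + x i :=
  stmt14_general pimat hpi0 pbar x f hf pstar hfeas hopt
end

section
/- The set C(x) of all clearing vectors of an Eisenberg–Noe network (π, p̄, x) admits the mixed-integer characterization C(x) = {p ∈ [0, p̄] : p ≤ x + πᵀp, and there exists y ∈ {0,1}^d with p ≥ p̄ ⊙ y and p ≥ x + πᵀp − Q·y}, where ⊙ denotes componentwise product and Q ≥ max_i((πᵀp̄)ᵢ + xᵢ) is any sufficiently large constant. -/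
/-!
Each complementarity condition `pᵢ = p̄ᵢ ∨ pᵢ = (πᵀp)ᵢ + xᵢ` is a disjunction of two equalities
whose sides are already ordered (`pᵢ ≤ p̄ᵢ`, `pᵢ ≤ (πᵀp)ᵢ + xᵢ`), so each equality reduces to the
reverse inequality, and the disjunction is selected by a binary `yᵢ`. The inequality switched off
by `yᵢ = 1` holds automatically because `Q` bounds `(πᵀp)ᵢ + xᵢ`: indeed `πᵀ` is monotone, having
nonnegative entries, so `(πᵀp)ᵢ + xᵢ ≤ (πᵀp̄)ᵢ + xᵢ ≤ Q ≤ Q + pᵢ`.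
-/

open Matrix

theorem Matrix.mulVec_mono_of_nonneg {m n R : Type*} [Fintype n] [Semiring R] [PartialOrder R]
    [IsOrderedRing R] {A : Matrix m n R} (hA : ∀ i j, 0 ≤ A i j) {u v : n → R} (huv : u ≤ v) :
    A *ᵥ u ≤ A *ᵥ v :=
  fun i => dotProduct_le_dotProduct_of_nonneg_left huv (hA i)

theorem eq_or_eq_iff_exists_binary {R : Type*} [Ring R] [LinearOrder R] [IsOrderedRing R]
    {a b c M : R} (hab : a ≤ b) (hac : a ≤ c) (ha : 0 ≤ a) (hcM : c ≤ M) :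
    (a = b ∨ a = c) ↔ ∃ y : R, (y = 0 ∨ y = 1) ∧ b * y ≤ a ∧ c - M * y ≤ a := by
  constructor
  · rintro (rfl | rfl)
    · refine ⟨1, Or.inr rfl, by rw [mul_one], ?_⟩
      rw [mul_one, sub_le_iff_le_add]
      exact hcM.trans (le_add_of_nonneg_left ha)
    · exact ⟨0, Or.inl rfl, by simpa using ha, by simp⟩
  · rintro ⟨y, rfl | rfl, hby, hcy⟩
    · exact Or.inr (le_antisymm hac (by simpa using hcy))
    · exact Or.inl (le_antisymm hab (by simpa using hby))

theorem stmt15_general {d : ℕ} (pimat : Matrix (Fin d) (Fin d) ℝ)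
    (hpi0 : ∀ i j, 0 ≤ pimat i j)
    (pbar : Fin d → ℝ)
    (x : Fin d → ℝ)
    (Q : ℝ) (hQ : ∀ i, pimat.transpose.mulVec pbar i + x i ≤ Q) :
    {p : Fin d → ℝ | 0 ≤ p ∧ p ≤ pbar ∧ p ≤ pimat.transpose.mulVec p + x ∧
        ∀ i, p i = pbar i ∨ p i = pimat.transpose.mulVec p i + x i} =
    {p : Fin d → ℝ | 0 ≤ p ∧ p ≤ pbar ∧
        (∀ i, p i ≤ x i + pimat.transpose.mulVec p i) ∧
        ∃ y : Fin d → ℝ, (∀ i, y i = 0 ∨ y i = 1) ∧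
          (∀ i, pbar i * y i ≤ p i) ∧
          (∀ i, x i + pimat.transpose.mulVec p i - Q * y i ≤ p i)} := by
  ext p
  simp only [Set.mem_ofPred_eq, Pi.le_def, Pi.add_apply, add_comm (x _)]
  refine and_congr_right fun hp0 => and_congr_right fun hpb => and_congr_right fun hpc => ?_
  have hcQ (i : Fin d) : pimat.transpose.mulVec p i + x i ≤ Q :=
    (add_le_add_left (mulVec_mono_of_nonneg (fun i j => hpi0 j i) hpb i) _).trans (hQ i)
  have binary (i : Fin d) := eq_or_eq_iff_exists_binary (hpb i) (hpc i) (hp0 i) (hcQ i)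
  simp only [binary, Classical.skolem, forall_and]

/-- Mixed-integer characterization of the set of all clearing vectors of an Eisenberg–Noe
network: `C(x) = {p ∈ [0, p̄] : p ≤ x + πᵀp, ∃ y ∈ {0,1}^d, p ≥ p̄ ⊙ y and
p ≥ x + πᵀp − Q·y}` for any `Q ≥ max_i ((πᵀp̄)ᵢ + xᵢ)`. -/
theorem stmt15 {d : ℕ} (pimat : Matrix (Fin d) (Fin d) ℝ)
    (hpi0 : ∀ i j, 0 ≤ pimat i j) (hpi1 : ∀ i, ∑ j, pimat i j = 1)
    (hpid : ∀ i, pimat i i = 0)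
    (pbar : Fin d → ℝ) (hpbar : ∀ i, 0 < pbar i)
    (x : Fin d → ℝ) (hx : 0 ≤ x)
    (Q : ℝ) (hQ : ∀ i, pimat.transpose.mulVec pbar i + x i ≤ Q) :
    {p : Fin d → ℝ | 0 ≤ p ∧ p ≤ pbar ∧ p ≤ pimat.transpose.mulVec p + x ∧
        ∀ i, p i = pbar i ∨ p i = pimat.transpose.mulVec p i + x i} =
    {p : Fin d → ℝ | 0 ≤ p ∧ p ≤ pbar ∧
        (∀ i, p i ≤ x i + pimat.transpose.mulVec p i) ∧
        ∃ y : Fin d → ℝ, (∀ i, y i = 0 ∨ y i = 1) ∧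
          (∀ i, pbar i * y i ≤ p i) ∧
          (∀ i, x i + pimat.transpose.mulVec p i - Q * y i ≤ p i)} :=
  stmt15_general pimat hpi0 pbar x Q hQ
end

section
/- For the Eisenberg–Noe aggregation Λ^EN and any x ∈ ℝ^d₊, evaluating at x shifted by |p̄|₂ in every coordinate yields the maximal value: Λ^EN(x + |p̄|₂·1) = 1ᵀp̄, with unique optimal solution p = p̄. Consequently, with α ≤ 1ᵀp̄ and any λ ∈ (0,1), the vector z = |p̄|₂·1_g belongs to R^EN_{α,λ}(X) for every X ∈ L⁰(ℝ^d₊); in particular R^EN_{α,λ}(X) ≠ ∅ if and only if α ≤ 1ᵀp̄. -/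
open MeasureTheory Classical

/-- The Eisenberg–Noe aggregation function on `ℝ^d₊` (real-valued version). -/
noncomputable def lamEN {d : ℕ} (pimat : Matrix (Fin d) (Fin d) ℝ) (pbar : Fin d → ℝ)
    (x : Fin d → ℝ) : ℝ :=
  sSup ((fun p : Fin d → ℝ => ∑ i, p i) ''
    {p : Fin d → ℝ | 0 ≤ p ∧ p ≤ pbar ∧ p ≤ pimat.transpose.mulVec p + x})

/-- The Eisenberg–Noe aggregation function, with value `−∞` off the nonnegative orthant. -/
noncomputable def lamENb {d : ℕ} (pimat : Matrix (Fin d) (Fin d) ℝ) (pbar : Fin d → ℝ)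
    (x : Fin d → ℝ) : WithBot ℝ :=
  if 0 ≤ x then ((lamEN pimat pbar x : ℝ) : WithBot ℝ) else ⊥

/-- The sensitive systemic value-at-risk for the Eisenberg–Noe model:
`R^EN_{α,λ}(X) = {z | ℙ(Λ^EN(X + Bᵀz) < α) ≤ λ, ℙ(X + Bᵀz ≥ 0) = 1}`. -/
noncomputable def REN {Ω : Type*} [MeasurableSpace Ω] (P : Measure Ω)
    {d g : ℕ} (pimat : Matrix (Fin d) (Fin d) ℝ) (pbar : Fin d → ℝ)
    (B : Matrix (Fin g) (Fin d) ℝ) (X : Ω → Fin d → ℝ) (α lam : ℝ) :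
    Set (Fin g → ℝ) :=
  {z : Fin g → ℝ |
    P {ω | lamENb pimat pbar (X ω + B.transpose.mulVec z) < (α : WithBot ℝ)}
        ≤ ENNReal.ofReal lam ∧
    P {ω | 0 ≤ X ω + B.transpose.mulVec z} = 1}

/-
Every feasible clearing vector is dominated by `p̄`, so `Λ^EN ≤ 1ᵀp̄`, with equality when `p̄` itself
is feasible, and then `p̄` is the only optimizer. Since `Πᵀp̄ ≥ 0` and every `p̄ᵢ` is at
most `|p̄|₂`, the vector `p̄` is feasible at `x + |p̄|₂·1` for every `x ≥ 0`. A grouping matrix has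
unit column sums, so `Bᵀ(|p̄|₂·1_g) = |p̄|₂·1_d`, and `Λ^EN(X + Bᵀz) = 1ᵀp̄ ≥ α` almost surely for
`z = |p̄|₂·1_g`. Conversely, if `α > 1ᵀp̄` then `Λ^EN(X + Bᵀz) < α` surely, which has probability
`1 > λ`.
-/

theorem Matrix.transpose_mulVec_const_of_sum_col_eq_one {m n R : Type*} [Fintype m]
    [NonAssocSemiring R] (A : Matrix m n R) (hA : ∀ i, ∑ j, A j i = 1) (c : R) :
    A.transpose.mulVec (fun _ => c) = fun _ => c := by
  funext i
  simp only [Matrix.mulVec, dotProduct, Matrix.transpose_apply, ← Finset.sum_mul, hA, one_mul]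

theorem Matrix.sum_col_eq_one_of_zero_one_of_existsUnique {m n R : Type*} [Fintype m]
    [NonAssocSemiring R] (A : Matrix m n R) (h01 : ∀ j i, A j i = 0 ∨ A j i = 1)
    (hcol : ∀ i, ∃! j, A j i = 1) (i : n) : ∑ j, A j i = 1 := by
  obtain ⟨j₀, hj₀, huniq⟩ := hcol i
  rw [Finset.sum_eq_single j₀ _ (fun h => absurd (Finset.mem_univ j₀) h), hj₀]
  intro j _ hne
  exact (h01 j i).resolve_right fun h => hne (huniq j h)

theorem eq_of_le_of_sum_eq {ι : Type*} [Fintype ι] {f g : ι → ℝ} (hfg : f ≤ g)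
    (hsum : ∑ i, f i = ∑ i, g i) : f = g :=
  eq_of_le_of_not_lt hfg fun hlt => (Fintype.sum_strictMono hlt).ne hsum

section EisenbergNoe

variable {d : ℕ} {pimat : Matrix (Fin d) (Fin d) ℝ} {pbar : Fin d → ℝ}

theorem lamEN_le_sum (hpbar : 0 ≤ pbar) {x : Fin d → ℝ} (hx : 0 ≤ x) :
    lamEN pimat pbar x ≤ ∑ i, pbar i := by
  refine csSup_le ⟨_, 0, ⟨le_rfl, hpbar, by rwa [Matrix.mulVec_zero, zero_add]⟩, rfl⟩ ?_
  rintro _ ⟨p, ⟨-, hp, -⟩, rfl⟩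
  exact Finset.sum_le_sum fun i _ => hp i

theorem lamENb_le_sum (hpbar : 0 ≤ pbar) (x : Fin d → ℝ) :
    lamENb pimat pbar x ≤ ((∑ i, pbar i : ℝ) : WithBot ℝ) := by
  unfold lamENb
  split_ifs with hx
  · exact WithBot.coe_le_coe.mpr (lamEN_le_sum hpbar hx)
  · exact bot_le

theorem lamEN_eq_sum_of_feasible (hpbar : 0 ≤ pbar) {x : Fin d → ℝ}
    (hfeas : pbar ≤ pimat.transpose.mulVec pbar + x) :
    lamEN pimat pbar x = ∑ i, pbar i := by
  refine IsGreatest.csSup_eq ⟨⟨pbar, ⟨hpbar, le_rfl, hfeas⟩, rfl⟩, ?_⟩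
  rintro _ ⟨p, ⟨-, hp, -⟩, rfl⟩
  exact Finset.sum_le_sum fun i _ => hp i

theorem le_transpose_mulVec_add_add_const (hpi : ∀ i j, 0 ≤ pimat i j) (hpbar : 0 ≤ pbar)
    {x : Fin d → ℝ} (hx : 0 ≤ x) {c : ℝ} (hc : ∀ i, pbar i ≤ c) :
    pbar ≤ pimat.transpose.mulVec pbar + (x + fun _ => c) := by
  intro i
  have hflow : 0 ≤ pimat.transpose.mulVec pbar i :=
    show 0 ≤ ∑ j, pimat j i * pbar j from Finset.sum_nonneg fun j _ => mul_nonneg (hpi j i) (hpbar j)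
  have hxi : 0 ≤ x i := hx i
  simp only [Pi.add_apply]
  linarith [hc i]

theorem mem_REN_of_ae {Ω : Type*} [MeasurableSpace Ω] {P : Measure Ω} [IsProbabilityMeasure P]
    {g : ℕ} {B : Matrix (Fin g) (Fin d) ℝ} {X : Ω → Fin d → ℝ} {α lam : ℝ} {z : Fin g → ℝ}
    (h : ∀ᵐ ω ∂P, 0 ≤ X ω + B.transpose.mulVec z ∧
      α ≤ lamEN pimat pbar (X ω + B.transpose.mulVec z)) :
    z ∈ REN P pimat pbar B X α lam := by
  refine ⟨(measure_mono_null ?_ (ae_iff.mp h)).trans_le zero_le,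
    (measure_congr (Filter.eventuallyEq_univ.mpr (h.mono fun _ hω => hω.1))).trans measure_univ⟩
  rintro ω hω ⟨hnonneg, hα⟩
  rw [Set.mem_ofPred_eq, lamENb, if_pos hnonneg, WithBot.coe_lt_coe] at hω
  exact hα.not_gt hω

theorem le_sum_of_mem_REN {Ω : Type*} [MeasurableSpace Ω] {P : Measure Ω}
    [IsProbabilityMeasure P] {g : ℕ} {B : Matrix (Fin g) (Fin d) ℝ} {X : Ω → Fin d → ℝ}
    {α lam : ℝ} (hlam : lam < 1) (hpbar : 0 ≤ pbar) {z : Fin g → ℝ}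
    (hz : z ∈ REN P pimat pbar B X α lam) : α ≤ ∑ i, pbar i := by
  by_contra! hα
  have hall : {ω | lamENb pimat pbar (X ω + B.transpose.mulVec z) < (α : WithBot ℝ)} =
      Set.univ :=
    Set.eq_univ_of_forall fun ω =>
      (lamENb_le_sum hpbar _).trans_lt (WithBot.coe_lt_coe.mpr hα)
  have := hz.1
  rw [hall, measure_univ] at this
  exact (ENNReal.ofReal_lt_one.mpr hlam).not_ge this

end EisenbergNoe

theorem stmt17_general {Ω : Type*} [MeasurableSpace Ω] (P : Measure Ω) [IsProbabilityMeasure P]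
    {d g : ℕ} (pimat : Matrix (Fin d) (Fin d) ℝ)
    (hpi0 : ∀ i j, 0 ≤ pimat i j)
    (pbar : Fin d → ℝ) (hpbar : ∀ i, 0 < pbar i)
    (B : Matrix (Fin g) (Fin d) ℝ)
    (hB01 : ∀ j i, B j i = 0 ∨ B j i = 1)
    (hBcol : ∀ i, ∃! j, B j i = 1)
    (X : Ω → Fin d → ℝ) (hXpos : ∀ᵐ ω ∂P, 0 ≤ X ω)
    (α lam : ℝ) (hlam1 : lam < 1)
    (c : ℝ) (hc : c = Real.sqrt (∑ i, (pbar i) ^ 2)) :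
    (∀ x : Fin d → ℝ, 0 ≤ x →
        lamEN pimat pbar (x + fun _ => c) = ∑ i, pbar i) ∧
    (∀ x : Fin d → ℝ, 0 ≤ x → ∀ p : Fin d → ℝ,
        0 ≤ p → p ≤ pbar → p ≤ pimat.transpose.mulVec p + (x + fun _ => c) →
        ∑ i, p i = ∑ i, pbar i → p = pbar) ∧
    (α ≤ ∑ i, pbar i → (fun _ => c) ∈ REN P pimat pbar B X α lam) ∧
    ((REN P pimat pbar B X α lam).Nonempty ↔ α ≤ ∑ i, pbar i) := by
  have hpbar₀ : 0 ≤ pbar := fun i => (hpbar i).le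
  have hc₀ : 0 ≤ c := hc ▸ Real.sqrt_nonneg _
  have hpbar_le : ∀ i, pbar i ≤ c := fun i => (le_abs_self _).trans <| hc ▸
    Real.abs_le_sqrt (Finset.single_le_sum (fun j _ => sq_nonneg (pbar j)) (Finset.mem_univ i))
  have hvalue : ∀ x : Fin d → ℝ, 0 ≤ x → lamEN pimat pbar (x + fun _ => c) = ∑ i, pbar i :=
    fun x hx => lamEN_eq_sum_of_feasible hpbar₀
      (le_transpose_mulVec_add_add_const hpi0 hpbar₀ hx hpbar_le)
  have hBc : B.transpose.mulVec (fun _ => c) = fun _ => c :=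
    B.transpose_mulVec_const_of_sum_col_eq_one
      (B.sum_col_eq_one_of_zero_one_of_existsUnique hB01 hBcol) c
  have hmem : α ≤ ∑ i, pbar i → (fun _ => c) ∈ REN P pimat pbar B X α lam := by
    intro hα
    refine mem_REN_of_ae (hXpos.mono fun ω hX => ?_)
    have hshift : 0 ≤ X ω + fun _ => c := add_nonneg hX fun _ => hc₀
    rw [hBc, hvalue _ hX]
    exact ⟨hshift, hα⟩
  exact ⟨hvalue, fun _ _ _ _ hp _ hsum => eq_of_le_of_sum_eq hp hsum, hmem,
    fun ⟨_, hz⟩ => le_sum_of_mem_REN hlam1 hpbar₀ hz, fun hα => ⟨_, hmem hα⟩⟩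

/-- `Λ^EN(x + |p̄|₂·1) = 1ᵀp̄` for `x ≥ 0`, with unique optimizer `p = p̄`; consequently
`z = |p̄|₂·1_g ∈ R^EN_{α,λ}(X)` when `α ≤ 1ᵀp̄`, and `R^EN_{α,λ}(X) ≠ ∅ ↔ α ≤ 1ᵀp̄`. -/
theorem stmt17 {Ω : Type*} [MeasurableSpace Ω] (P : Measure Ω) [IsProbabilityMeasure P]
    {d g : ℕ} (pimat : Matrix (Fin d) (Fin d) ℝ)
    (hpi0 : ∀ i j, 0 ≤ pimat i j) (hpi1 : ∀ i, ∑ j, pimat i j = 1)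
    (hpid : ∀ i, pimat i i = 0)
    (pbar : Fin d → ℝ) (hpbar : ∀ i, 0 < pbar i)
    (B : Matrix (Fin g) (Fin d) ℝ)
    (hB01 : ∀ j i, B j i = 0 ∨ B j i = 1)
    (hBcol : ∀ i, ∃! j, B j i = 1)
    (X : Ω → Fin d → ℝ) (hX : Measurable X) (hXpos : ∀ᵐ ω ∂P, 0 ≤ X ω)
    (α lam : ℝ) (hα : 0 < α) (hlam0 : 0 < lam) (hlam1 : lam < 1)
    (c : ℝ) (hc : c = Real.sqrt (∑ i, (pbar i) ^ 2)) :
    (∀ x : Fin d → ℝ, 0 ≤ x →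
        lamEN pimat pbar (x + fun _ => c) = ∑ i, pbar i) ∧
    (∀ x : Fin d → ℝ, 0 ≤ x → ∀ p : Fin d → ℝ,
        0 ≤ p → p ≤ pbar → p ≤ pimat.transpose.mulVec p + (x + fun _ => c) →
        ∑ i, p i = ∑ i, pbar i → p = pbar) ∧
    (α ≤ ∑ i, pbar i → (fun _ => c) ∈ REN P pimat pbar B X α lam) ∧
    ((REN P pimat pbar B X α lam).Nonempty ↔ α ≤ ∑ i, pbar i) :=
  stmt17_general P pimat hpi0 pbar hpbar B hB01 hBcol X hXpos α lam hlam1 c hc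
end

section
/- Let z^UB ∈ ℝ^g be defined by z^UB_j := max{p̄ᵢ : B_{ji} = 1}. Then for every x ∈ ℝ^d₊ and every z ≥ z^LB (the componentwise lower bound ensuring x + Bᵀz ≥ 0), the Eisenberg–Noe aggregation satisfies Λ^EN(x + Bᵀz) = Λ^EN(x + Bᵀ(z ∧ z^UB)); consequently R^EN_{α,λ}(X) = (R^EN_{α,λ}(X) ∩ [z^LB, z^UB]) + ℝ^g₊ (Motzkin decomposition with compact part). -/
open MeasureTheory Classical Pointwise

/-!
A payment vector `p ≤ p̄` never uses more than `p̄ᵢ` of the outside asset `xᵢ`, so the feasible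
payment vectors, hence `Λ^EN(x)`, depend on `x` only through the capped vector `x ∧ p̄`. Since
every member of group `j` has `p̄ᵢ ≤ z^UB_j`, capping the capital allocation `z` at `z^UB` does not
change `(x + Bᵀz) ∧ p̄` when `x ≥ 0`. Hence `R^EN` is closed under `z ↦ z ∧ z^UB`; it is also an upper
set, because `Λ^EN` is monotone, and it lies above `z^LB`. Any such set `R` satisfies
`R = (R ∩ [z^LB, z^UB]) + ℝ^g₊`, via `z = (z ∧ z^UB) + (z - z ∧ z^UB)`.
-/

theorem eq_inter_Icc_add_nonneg_of_isUpperSet {α : Type*} [Lattice α] [AddCommGroup α]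
    [IsOrderedAddMonoid α] {R : Set α} {l u : α} (hR : IsUpperSet R)
    (hinf : ∀ z ∈ R, z ⊓ u ∈ R) (hl : R ⊆ Set.Ici l) :
    R = (R ∩ Set.Icc l u) + {y | 0 ≤ y} := by
  ext z
  constructor
  · intro hz
    have hzu := hinf z hz
    exact ⟨z ⊓ u, ⟨hzu, hl hzu, inf_le_right⟩, z - z ⊓ u, sub_nonneg.2 inf_le_left,
      add_sub_cancel _ _⟩
  · rintro ⟨a, ⟨ha, -⟩, y, hy, rfl⟩
    exact hR (le_add_of_nonneg_right hy) ha

theorem add_inf_inf_of_le {α : Type*} [Lattice α] [AddGroup α] [AddLeftMono α]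
    {x v w p : α} (h : p ≤ x + w) : (x + v ⊓ w) ⊓ p = (x + v) ⊓ p := by
  rw [add_inf, inf_assoc, inf_eq_right.2 h]

theorem Matrix.transpose_mulVec_apply_of_unique {d g : ℕ} {B : Matrix (Fin g) (Fin d) ℝ}
    {i : Fin d} {j : Fin g} (hB01 : ∀ k, B k i = 0 ∨ B k i = 1) (hj : B j i = 1)
    (huniq : ∀ k, B k i = 1 → k = j) (z : Fin g → ℝ) : B.transpose.mulVec z i = z j := by
  simp only [Matrix.mulVec, dotProduct, Matrix.transpose_apply]
  rw [Finset.sum_eq_single_of_mem j (Finset.mem_univ j), hj, one_mul]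
  intro k _ hk
  rw [(hB01 k).resolve_right (mt (huniq k) hk), zero_mul]

theorem Matrix.transpose_mulVec_mono_of_nonneg {d g : ℕ} {B : Matrix (Fin g) (Fin d) ℝ}
    (hB : ∀ j i, 0 ≤ B j i) : Monotone B.transpose.mulVec := fun z z' h i => by
  simp only [Matrix.mulVec, dotProduct, Matrix.transpose_apply]
  exact Finset.sum_le_sum fun j _ => mul_le_mul_of_nonneg_left (h j) (hB j i)

section Aggregation

variable {d : ℕ} (pimat : Matrix (Fin d) (Fin d) ℝ) (pbar : Fin d → ℝ)

def feasiblePayments (x : Fin d → ℝ) : Set (Fin d → ℝ) :=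
  {p | 0 ≤ p ∧ p ≤ pbar ∧ p ≤ pimat.transpose.mulVec p + x}

theorem lamEN_eq_sSup_feasiblePayments (x : Fin d → ℝ) :
    lamEN pimat pbar x = sSup ((fun p : Fin d → ℝ => ∑ i, p i) '' feasiblePayments pimat pbar x) :=
  rfl

variable {pimat pbar}

theorem feasiblePayments_mono {x x' : Fin d → ℝ} (h : x ≤ x') :
    feasiblePayments pimat pbar x ⊆ feasiblePayments pimat pbar x' :=
  fun _ ⟨hp0, hpbar, hp⟩ => ⟨hp0, hpbar, hp.trans (add_le_add_right h _)⟩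

theorem feasiblePayments_inf_pbar (hpi0 : ∀ i j, 0 ≤ pimat i j) (x : Fin d → ℝ) :
    feasiblePayments pimat pbar (x ⊓ pbar) = feasiblePayments pimat pbar x := by
  refine (feasiblePayments_mono inf_le_left).antisymm fun p ⟨hp0, hpbar, hp⟩ => ⟨hp0, hpbar, ?_⟩
  have hinflow : 0 ≤ pimat.transpose.mulVec p :=
    (Matrix.mulVec_zero _).symm.trans_le (Matrix.transpose_mulVec_mono_of_nonneg hpi0 hp0)
  rw [add_inf]
  exact le_inf hp (hpbar.trans (le_add_of_nonneg_left hinflow))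

theorem lamEN_inf_pbar (hpi0 : ∀ i j, 0 ≤ pimat i j) (x : Fin d → ℝ) :
    lamEN pimat pbar (x ⊓ pbar) = lamEN pimat pbar x := by
  rw [lamEN_eq_sSup_feasiblePayments, lamEN_eq_sSup_feasiblePayments,
    feasiblePayments_inf_pbar hpi0]

theorem lamEN_mono (hpbar : 0 ≤ pbar) {x x' : Fin d → ℝ} (hx : 0 ≤ x) (h : x ≤ x') :
    lamEN pimat pbar x ≤ lamEN pimat pbar x' := by
  refine csSup_le_csSup ⟨∑ i, pbar i, ?_⟩ ⟨0, 0, ⟨le_rfl, hpbar, ?_⟩, Finset.sum_const_zero⟩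
    (Set.image_mono (feasiblePayments_mono h))
  · rintro _ ⟨p, ⟨-, hp, -⟩, rfl⟩
    exact Finset.sum_le_sum fun i _ => hp i
  · simpa only [Matrix.mulVec_zero, zero_add] using hx

theorem lamENb_mono (hpbar : 0 ≤ pbar) : Monotone (lamENb pimat pbar) := by
  intro x x' h
  unfold lamENb
  split_ifs with hx hx'
  · exact WithBot.coe_le_coe.2 (lamEN_mono hpbar hx h)
  · exact absurd (hx.trans h) hx'
  all_goals exact bot_le

theorem lamENb_inf_pbar (hpi0 : ∀ i j, 0 ≤ pimat i j) (hpbar : 0 ≤ pbar) (x : Fin d → ℝ) :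
    lamENb pimat pbar (x ⊓ pbar) = lamENb pimat pbar x := by
  simp only [lamENb, le_inf_iff, hpbar, and_true, lamEN_inf_pbar hpi0]

end Aggregation

section SystemicRisk

variable {Ω : Type*} [MeasurableSpace Ω] {P : Measure Ω} {d g : ℕ}
  {pimat : Matrix (Fin d) (Fin d) ℝ} {pbar : Fin d → ℝ} {B : Matrix (Fin g) (Fin d) ℝ}
  {X : Ω → Fin d → ℝ} {α lam : ℝ}

theorem isUpperSet_REN [IsProbabilityMeasure P] (hpbar : 0 ≤ pbar) (hB : ∀ j i, 0 ≤ B j i) :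
    IsUpperSet (REN P pimat pbar B X α lam) := by
  intro z z' h ⟨hrisk, hsolv⟩
  have hle : ∀ ω, X ω + B.transpose.mulVec z ≤ X ω + B.transpose.mulVec z' := fun ω =>
    add_le_add_right (Matrix.transpose_mulVec_mono_of_nonneg hB h) _
  refine ⟨(measure_mono fun ω hω => ?_).trans hrisk,
    le_antisymm prob_le_one (hsolv ▸ measure_mono fun ω hω => (hω.trans (hle ω)))⟩
  exact (lamENb_mono hpbar (hle ω)).trans_lt hω

theorem mem_REN_iff_of_ae_inf_eq (hpi0 : ∀ i j, 0 ≤ pimat i j) (hpbar : 0 ≤ pbar)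
    {z z' : Fin g → ℝ}
    (h : ∀ᵐ ω ∂P, (X ω + B.transpose.mulVec z) ⊓ pbar = (X ω + B.transpose.mulVec z') ⊓ pbar) :
    z ∈ REN P pimat pbar B X α lam ↔ z' ∈ REN P pimat pbar B X α lam := by
  have hrisk : {ω | lamENb pimat pbar (X ω + B.transpose.mulVec z) < (α : WithBot ℝ)}
      =ᵐ[P] {ω | lamENb pimat pbar (X ω + B.transpose.mulVec z') < (α : WithBot ℝ)} := by
    refine Filter.eventuallyEq_set.2 (h.mono fun ω hω => ?_)
    change _ < (α : WithBot ℝ) ↔ _ < (α : WithBot ℝ)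
    rw [← lamENb_inf_pbar hpi0 hpbar, hω, lamENb_inf_pbar hpi0 hpbar]
  have hsolv : {ω | 0 ≤ X ω + B.transpose.mulVec z}
      =ᵐ[P] {ω | 0 ≤ X ω + B.transpose.mulVec z'} := by
    refine Filter.eventuallyEq_set.2 (h.mono fun ω hω => ?_)
    have hcap : ∀ y : Fin d → ℝ, 0 ≤ y ⊓ pbar ↔ 0 ≤ y := fun y => by simp [hpbar]
    change (0 : Fin d → ℝ) ≤ _ ↔ (0 : Fin d → ℝ) ≤ _
    rw [← hcap, hω, hcap]
  simp only [REN, Set.mem_ofPred_eq, measure_congr hrisk, measure_congr hsolv]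

theorem ae_nonneg_of_mem_REN [IsProbabilityMeasure P] (hX : Measurable X) {z : Fin g → ℝ}
    (hz : z ∈ REN P pimat pbar B X α lam) : ∀ᵐ ω ∂P, 0 ≤ X ω + B.transpose.mulVec z := by
  rw [ae_iff_measure_eq (measurableSet_le measurable_const (hX.add_const _)).nullMeasurableSet,
    measure_univ]
  exact hz.2

end SystemicRisk

theorem stmt18_general {Ω : Type*} [MeasurableSpace Ω] (P : Measure Ω) [IsProbabilityMeasure P]
    {d g : ℕ} (pimat : Matrix (Fin d) (Fin d) ℝ)
    (hpi0 : ∀ i j, 0 ≤ pimat i j)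
    (pbar : Fin d → ℝ) (hpbar : ∀ i, 0 < pbar i)
    (B : Matrix (Fin g) (Fin d) ℝ)
    (hB01 : ∀ j i, B j i = 0 ∨ B j i = 1)
    (hBcol : ∀ i, ∃! j, B j i = 1)
    (X : Ω → Fin d → ℝ) (hX : Measurable X) (hXpos : ∀ᵐ ω ∂P, 0 ≤ X ω)
    (α lam : ℝ)
    (zUB : Fin g → ℝ)
    (hzUB : ∀ j, (∀ i, B j i = 1 → pbar i ≤ zUB j) ∧ ∃ i, B j i = 1 ∧ zUB j = pbar i)
    (zLB : Fin g → ℝ)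
    (hzLB : ∀ z : Fin g → ℝ,
      (∀ᵐ ω ∂P, 0 ≤ X ω + B.transpose.mulVec z) ↔ zLB ≤ z) :
    (∀ x : Fin d → ℝ, 0 ≤ x → ∀ z : Fin g → ℝ, 0 ≤ x + B.transpose.mulVec z →
        lamEN pimat pbar (x + B.transpose.mulVec z)
          = lamEN pimat pbar (x + B.transpose.mulVec (z ⊓ zUB))) ∧
    REN P pimat pbar B X α lam
      = (REN P pimat pbar B X α lam ∩ Set.Icc zLB zUB) + {y : Fin g → ℝ | 0 ≤ y} := by
  choose grp hgrp huniq using hBcol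
  have hBz : ∀ z, B.transpose.mulVec z = fun i => z (grp i) := fun z => funext fun i =>
    Matrix.transpose_mulVec_apply_of_unique (hB01 · i) (hgrp i) (huniq i) z
  have hpbar' : 0 ≤ pbar := fun i => (hpbar i).le
  have hcap : ∀ x, 0 ≤ x → ∀ z, (x + B.transpose.mulVec (z ⊓ zUB)) ⊓ pbar
      = (x + B.transpose.mulVec z) ⊓ pbar := fun x hx z => by
    simp only [hBz]
    exact add_inf_inf_of_le fun i => le_add_of_nonneg_of_le (hx i) ((hzUB (grp i)).1 i (hgrp i))
  refine ⟨fun x hx z _ => by rw [← lamEN_inf_pbar hpi0, ← hcap x hx, lamEN_inf_pbar hpi0], ?_⟩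
  refine eq_inter_Icc_add_nonneg_of_isUpperSet ?_ (fun z hz => ?_)
    (fun z hz => (hzLB z).1 (ae_nonneg_of_mem_REN hX hz))
  · exact isUpperSet_REN hpbar' fun j i => (hB01 j i).elim (·.ge) (· ▸ zero_le_one)
  · refine (mem_REN_iff_of_ae_inf_eq hpi0 hpbar' ?_).1 hz
    filter_upwards [hXpos] with ω hω
    exact (hcap _ hω z).symm

/-- With `z^UB_j = max {p̄ᵢ : B_{ji} = 1}`, the Eisenberg–Noe aggregation satisfies
`Λ^EN(x + Bᵀz) = Λ^EN(x + Bᵀ(z ∧ z^UB))`, and consequently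
`R^EN_{α,λ}(X) = (R^EN_{α,λ}(X) ∩ [z^LB, z^UB]) + ℝ^g₊` (Motzkin decomposition). -/
theorem stmt18 {Ω : Type*} [MeasurableSpace Ω] (P : Measure Ω) [IsProbabilityMeasure P]
    {d g : ℕ} (pimat : Matrix (Fin d) (Fin d) ℝ)
    (hpi0 : ∀ i j, 0 ≤ pimat i j) (hpi1 : ∀ i, ∑ j, pimat i j = 1)
    (hpid : ∀ i, pimat i i = 0)
    (pbar : Fin d → ℝ) (hpbar : ∀ i, 0 < pbar i)
    (B : Matrix (Fin g) (Fin d) ℝ)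
    (hB01 : ∀ j i, B j i = 0 ∨ B j i = 1)
    (hBcol : ∀ i, ∃! j, B j i = 1)
    (hBrow : ∀ j, ∃ i, B j i = 1)
    (X : Ω → Fin d → ℝ) (hX : Measurable X) (hXpos : ∀ᵐ ω ∂P, 0 ≤ X ω)
    (α lam : ℝ) (hα : 0 < α) (hlam0 : 0 < lam) (hlam1 : lam < 1)
    (zUB : Fin g → ℝ)
    (hzUB : ∀ j, (∀ i, B j i = 1 → pbar i ≤ zUB j) ∧ ∃ i, B j i = 1 ∧ zUB j = pbar i)
    (zLB : Fin g → ℝ)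
    (hzLB : ∀ z : Fin g → ℝ,
      (∀ᵐ ω ∂P, 0 ≤ X ω + B.transpose.mulVec z) ↔ zLB ≤ z) :
    (∀ x : Fin d → ℝ, 0 ≤ x → ∀ z : Fin g → ℝ, 0 ≤ x + B.transpose.mulVec z →
        lamEN pimat pbar (x + B.transpose.mulVec z)
          = lamEN pimat pbar (x + B.transpose.mulVec (z ⊓ zUB))) ∧
    REN P pimat pbar B X α lam
      = (REN P pimat pbar B X α lam ∩ Set.Icc zLB zUB) + {y : Fin g → ℝ | 0 ≤ y} :=
  stmt18_general P pimat hpi0 pbar hpbar B hB01 hBcol X hX hXpos α lam zUB hzUB zLB hzLB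
end

section
/- For sample points x¹,…,x^N ∈ ℝ^d, the empirical sensitive systemic value-at-risk for the Eisenberg–Noe model admits the mixed-integer reformulation: R^{EN,N}_{α,λ}(x¹,…,x^N) := {z ∈ ℝ^g : (1/N)∑ₙ 1{Λ^EN(xⁿ + Bᵀz) < α} ≤ λ, xⁿ + Bᵀz ≥ 0 for all n} equals the set of z ∈ ℝ^g for which there exist pⁿ ∈ [0, p̄] and yⁿ ∈ {0,1}, n = 1,…,N, with ∑ₙ yⁿ ≥ N(1 − λ), 1ᵀpⁿ ≥ α yⁿ, xⁿ + Bᵀz ≥ 0, and pⁿ ≤ πᵀpⁿ + xⁿ + Bᵀz for all n. -/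
open Finset

section Counting

variable {ι : Type*} [Fintype ι]

theorem sum_ite_not_eq_card_sub (P : ι → Prop) [DecidablePred P] :
    ∑ i, (if ¬P i then (1 : ℝ) else 0) = Fintype.card ι - ∑ i, if P i then (1 : ℝ) else 0 := by
  rw [eq_sub_iff_add_eq, ← sum_add_distrib]
  have h : ∀ i, ((if ¬P i then (1 : ℝ) else 0) + if P i then 1 else 0) = 1 := fun i => by
    split_ifs <;> simp_all
  rw [sum_congr rfl fun i _ => h i]
  simp

theorem one_div_card_mul_sum_ite_le_iff [Nonempty ι] (P : ι → Prop) [DecidablePred P]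
    (lam : ℝ) :
    1 / (Fintype.card ι : ℝ) * ∑ i, (if P i then (1 : ℝ) else 0) ≤ lam ↔
      Fintype.card ι * (1 - lam) ≤ ∑ i, if ¬P i then (1 : ℝ) else 0 := by
  have hcard : (0 : ℝ) < Fintype.card ι := by exact_mod_cast Fintype.card_pos
  rw [sum_ite_not_eq_card_sub, one_div_mul_eq_div, div_le_iff₀ hcard]
  constructor <;> intro h <;> linarith

theorem exists_binary_le_sum_iff (Q : ι → Prop) [DecidablePred Q] (c : ℝ) :
    (∃ y : ι → ℝ, (∀ i, y i = 0 ∨ y i = 1) ∧ c ≤ ∑ i, y i ∧ ∀ i, y i = 1 → Q i) ↔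
      c ≤ ∑ i, if Q i then (1 : ℝ) else 0 := by
  constructor
  · rintro ⟨y, hy01, hc, hyQ⟩
    refine hc.trans (sum_le_sum fun i _ => ?_)
    rcases hy01 i with h | h
    · rw [h]; split_ifs <;> norm_num
    · rw [h, if_pos (hyQ i h)]
  · intro hc
    refine ⟨fun i => if Q i then 1 else 0, fun i => ?_, hc, fun i h => ?_⟩
    · by_cases hQ : Q i <;> simp [hQ]
    · by_contra hQ
      simp [hQ] at h

end Counting

section Clearing

variable {d : ℕ} (pimat : Matrix (Fin d) (Fin d) ℝ) (pbar x : Fin d → ℝ)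

def clearingSet : Set (Fin d → ℝ) :=
  {p | 0 ≤ p ∧ p ≤ pbar ∧ p ≤ pimat.transpose.mulVec p + x}

theorem lamEN_eq_sSup :
    lamEN pimat pbar x = sSup ((fun p : Fin d → ℝ => ∑ i, p i) '' clearingSet pimat pbar x) :=
  rfl

theorem isClosed_clearingSet : IsClosed (clearingSet pimat pbar x) := by
  have hmul : Continuous fun p : Fin d → ℝ => pimat.transpose.mulVec p + x :=
    (Continuous.matrix_mulVec continuous_const continuous_id).add continuous_const
  exact (isClosed_le continuous_const continuous_id).inter
    ((isClosed_le continuous_id continuous_const).inter (isClosed_le continuous_id hmul))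

theorem isCompact_clearingSet : IsCompact (clearingSet pimat pbar x) :=
  (isCompact_Icc (a := 0) (b := pbar)).of_isClosed_subset (isClosed_clearingSet pimat pbar x)
    fun _ hp => ⟨hp.1, hp.2.1⟩

theorem zero_mem_clearingSet {pbar x : Fin d → ℝ} (hpbar : 0 ≤ pbar) (hx : 0 ≤ x) :
    0 ∈ clearingSet pimat pbar x :=
  ⟨le_rfl, hpbar, by simpa using hx⟩

theorem sum_le_lamEN {pbar x p : Fin d → ℝ} (hp : p ∈ clearingSet pimat pbar x) :
    ∑ i, p i ≤ lamEN pimat pbar x :=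
  le_csSup ((isCompact_clearingSet pimat pbar x).bddAbove_image
    (continuous_finsetSum _ fun i _ => continuous_apply i).continuousOn) ⟨p, hp, rfl⟩

theorem exists_mem_clearingSet_sum_eq_lamEN {pbar x : Fin d → ℝ} (hpbar : 0 ≤ pbar)
    (hx : 0 ≤ x) : ∃ p ∈ clearingSet pimat pbar x, ∑ i, p i = lamEN pimat pbar x := by
  obtain ⟨p, hp, hmax⟩ := (isCompact_clearingSet pimat pbar x).exists_isMaxOn
    ⟨0, zero_mem_clearingSet pimat hpbar hx⟩
    (continuous_finsetSum _ fun i _ => continuous_apply i).continuousOn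
  refine ⟨p, hp, ?_⟩
  rw [lamEN_eq_sSup]
  have hgreatest : IsGreatest ((fun p : Fin d → ℝ => ∑ i, p i) '' clearingSet pimat pbar x)
      (∑ i, p i) := ⟨⟨p, hp, rfl⟩, by rintro _ ⟨q, hq, rfl⟩; exact hmax hq⟩
  exact hgreatest.csSup_eq.symm

end Clearing

theorem stmt19_general {d g N : ℕ} [NeZero N] (pimat : Matrix (Fin d) (Fin d) ℝ)
    (pbar : Fin d → ℝ) (hpbar : ∀ i, 0 < pbar i)
    (B : Matrix (Fin g) (Fin d) ℝ)
    (α lam : ℝ)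
    (x : Fin N → Fin d → ℝ) :
    {z : Fin g → ℝ |
        (1 / (N : ℝ)) * ∑ n : Fin N,
            (if lamEN pimat pbar (x n + B.transpose.mulVec z) < α then (1 : ℝ) else 0)
          ≤ lam ∧
        ∀ n, 0 ≤ x n + B.transpose.mulVec z} =
    {z : Fin g → ℝ | ∃ p : Fin N → Fin d → ℝ, ∃ y : Fin N → ℝ,
        (∀ n, y n = 0 ∨ y n = 1) ∧
        (N : ℝ) * (1 - lam) ≤ ∑ n : Fin N, y n ∧
        ∀ n, α * y n ≤ ∑ i, p n i ∧
          0 ≤ x n + B.transpose.mulVec z ∧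
          0 ≤ p n ∧ p n ≤ pbar ∧
          p n ≤ pimat.transpose.mulVec (p n) + x n + B.transpose.mulVec z} := by
  have hpbar' : 0 ≤ pbar := fun i => (hpbar i).le
  ext z
  have hfreq := one_div_card_mul_sum_ite_le_iff
    (fun n : Fin N => lamEN pimat pbar (x n + B.transpose.mulVec z) < α) lam
  rw [Fintype.card_fin] at hfreq
  simp only [Set.mem_ofPred_eq, hfreq, ← exists_binary_le_sum_iff, not_lt]
  constructor
  · rintro ⟨⟨y, hy01, hy, hyα⟩, hnn⟩
    choose p hp hpsum using fun n => exists_mem_clearingSet_sum_eq_lamEN pimat hpbar' (hnn n)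
    refine ⟨p, y, hy01, hy, fun n => ⟨?_, hnn n, (hp n).1, (hp n).2.1, ?_⟩⟩
    · rcases hy01 n with h | h
      · rw [h, mul_zero]
        exact sum_nonneg fun i _ => (hp n).1 i
      · rw [h, mul_one, hpsum]
        exact hyα n h
    · rw [add_assoc]
      exact (hp n).2.2
  · rintro ⟨p, y, hy01, hy, hn⟩
    refine ⟨⟨y, hy01, hy, fun n h => ?_⟩, fun n => (hn n).2.1⟩
    obtain ⟨hα, -, hp0, hpb, hpfix⟩ := hn n
    rw [h, mul_one] at hα
    rw [add_assoc] at hpfix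
    exact hα.trans (sum_le_lamEN pimat ⟨hp0, hpb, hpfix⟩)

/-- Mixed-integer reformulation of the empirical sensitive systemic value-at-risk for
the Eisenberg–Noe model. -/
theorem stmt19 {d g N : ℕ} [NeZero N] (pimat : Matrix (Fin d) (Fin d) ℝ)
    (hpi0 : ∀ i j, 0 ≤ pimat i j) (hpi1 : ∀ i, ∑ j, pimat i j = 1)
    (hpid : ∀ i, pimat i i = 0)
    (pbar : Fin d → ℝ) (hpbar : ∀ i, 0 < pbar i)
    (B : Matrix (Fin g) (Fin d) ℝ)
    (hB01 : ∀ j i, B j i = 0 ∨ B j i = 1)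
    (hBcol : ∀ i, ∃! j, B j i = 1)
    (α lam : ℝ) (hα : 0 < α) (hlam0 : 0 < lam) (hlam1 : lam < 1)
    (x : Fin N → Fin d → ℝ) :
    {z : Fin g → ℝ |
        (1 / (N : ℝ)) * ∑ n : Fin N,
            (if lamEN pimat pbar (x n + B.transpose.mulVec z) < α then (1 : ℝ) else 0)
          ≤ lam ∧
        ∀ n, 0 ≤ x n + B.transpose.mulVec z} =
    {z : Fin g → ℝ | ∃ p : Fin N → Fin d → ℝ, ∃ y : Fin N → ℝ,
        (∀ n, y n = 0 ∨ y n = 1) ∧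
        (N : ℝ) * (1 - lam) ≤ ∑ n : Fin N, y n ∧
        ∀ n, α * y n ≤ ∑ i, p n i ∧
          0 ≤ x n + B.transpose.mulVec z ∧
          0 ≤ p n ∧ p n ≤ pbar ∧
          p n ≤ pimat.transpose.mulVec (p n) + x n + B.transpose.mulVec z} :=
  stmt19_general pimat pbar hpbar B α lam x
end
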